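/- Let σ₀, σ₁ : ℝ → ℂ be twice continuously differentiable on [0,1] and let y : ℝ → ℂ be five times differentiable on [0,1]. Define the quasi-derivatives y^[1] := y', y^[2] := y'', y^[3] := y''' − σ₁·y + σ₀·y', y^[4] := (y^[3])' + σ₀·y'', y^[5] := (y^[4])' + σ₁·y''. Then for every x ∈ [0,1], y^[5](x) = y^{(5)}(x) + (σ₀·y'')'(x) + (σ₀·y')''(x) − (σ₁'·y)'(x) − σ₁'(x)·y'(x). That is, for classical coefficients, the quasi-derivative scheme generated by the 5×5 associated matrix with rows (0,1,0,0,0), (0,0,1,0,0), (σ₁, −σ₀, 0, 1, 0), (0, 0, −σ₀, 0, 1), (0, 0, −σ₁, 0, 0) realizes the fifth-order differential expression ℓ₅(y) = y^{(5)} + (p y'')' + (p y')'' + (q y)' + q y' with p = σ₀ and q = −σ₁'. -/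

import Mathlib

/-!
Unfolding the quasi-derivatives with the sum and product rules gives
`y^[5] = y⁽⁵⁾ - (σ₁ y)'' + (σ₀ y')'' + (σ₀ y'')' + σ₁ y''`, and Leibniz's rule
`(σ₁ y)'' = (σ₁' y)' + σ₁' y' + σ₁ y''` makes the `σ₁ y''` terms cancel.
-/

open Set

/-- Derivative on the interval `[0,1]` (one-sided at the endpoints). -/
noncomputable def D (f : ℝ → ℂ) : ℝ → ℂ := derivWithin f (Set.Icc 0 1)

section Rules

variable {f g : ℝ → ℂ} {x : ℝ}

theorem D_congr (h : EqOn f g (Icc 0 1)) (hx : x ∈ Icc 0 1) : D f x = D g x :=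
  derivWithin_congr h (h hx)

theorem D_fun_add (hf : DifferentiableOn ℝ f (Icc 0 1)) (hg : DifferentiableOn ℝ g (Icc 0 1))
    (hx : x ∈ Icc 0 1) : D (fun t => f t + g t) x = D f x + D g x :=
  derivWithin_fun_add (hf x hx) (hg x hx)

theorem D_fun_sub (hf : DifferentiableOn ℝ f (Icc 0 1)) (hg : DifferentiableOn ℝ g (Icc 0 1))
    (hx : x ∈ Icc 0 1) : D (fun t => f t - g t) x = D f x - D g x :=
  derivWithin_fun_sub (hf x hx) (hg x hx)

theorem D_fun_mul (hf : DifferentiableOn ℝ f (Icc 0 1)) (hg : DifferentiableOn ℝ g (Icc 0 1))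
    (hx : x ∈ Icc 0 1) : D (fun t => f t * g t) x = D f x * g x + f x * D g x :=
  derivWithin_mul (hf x hx) (hg x hx)

theorem differentiableOn_D_fun_mul (hf : DifferentiableOn ℝ f (Icc 0 1))
    (hf' : DifferentiableOn ℝ (D f) (Icc 0 1)) (hg : DifferentiableOn ℝ g (Icc 0 1))
    (hg' : DifferentiableOn ℝ (D g) (Icc 0 1)) :
    DifferentiableOn ℝ (D fun t => f t * g t) (Icc 0 1) :=
  ((hf'.fun_mul hg).fun_add (hf.fun_mul hg')).congr fun _ ht => D_fun_mul hf hg ht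

theorem D_D_fun_mul (hf : DifferentiableOn ℝ f (Icc 0 1))
    (hf' : DifferentiableOn ℝ (D f) (Icc 0 1)) (hg : DifferentiableOn ℝ g (Icc 0 1))
    (hg' : DifferentiableOn ℝ (D g) (Icc 0 1)) (hx : x ∈ Icc 0 1) :
    D (D fun t => f t * g t) x
      = D (fun t => D f t * g t) x + D f x * D g x + f x * D (D g) x := by
  rw [D_congr (fun _ ht => D_fun_mul hf hg ht) hx, D_fun_add (hf'.fun_mul hg) (hf.fun_mul hg') hx,
    D_fun_mul hf hg' hx, add_assoc]

end Rules

theorem statement6_general (s0 s1 y : ℝ → ℂ)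
    (hs0 : DifferentiableOn ℝ s0 (Icc 0 1))
    (hs0' : DifferentiableOn ℝ (D s0) (Icc 0 1))
    (hs1 : DifferentiableOn ℝ s1 (Icc 0 1))
    (hs1' : DifferentiableOn ℝ (D s1) (Icc 0 1))
    (hy : DifferentiableOn ℝ y (Icc 0 1))
    (hy1 : DifferentiableOn ℝ (D y) (Icc 0 1))
    (hy2 : DifferentiableOn ℝ (D (D y)) (Icc 0 1))
    (hy3 : DifferentiableOn ℝ (D (D (D y))) (Icc 0 1))
    (hy4 : DifferentiableOn ℝ (D (D (D (D y)))) (Icc 0 1))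
    (qy3 qy4 qy5 : ℝ → ℂ)
    (hqy3 : qy3 = fun x => D (D (D y)) x - s1 x * y x + s0 x * D y x)
    (hqy4 : qy4 = fun x => D qy3 x + s0 x * D (D y) x)
    (hqy5 : qy5 = fun x => D qy4 x + s1 x * D (D y) x) :
    ∀ x ∈ Icc (0:ℝ) 1,
      qy5 x = D (D (D (D (D y)))) x
        + D (fun t => s0 t * D (D y) t) x
        + D (D (fun t => s0 t * D y t)) x
        - D (fun t => D s1 t * y t) x
        - D s1 x * D y x := by
  intro x hx
  have hs1y := differentiableOn_D_fun_mul hs1 hs1' hy hy1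
  have hs0y1 := differentiableOn_D_fun_mul hs0 hs0' hy1 hy2
  have hDqy3 : EqOn (D qy3)
      (fun t => D (D (D (D y))) t - D (fun s => s1 s * y s) t + D (fun s => s0 s * D y s) t)
      (Icc 0 1) := fun t ht => by
    rw [hqy3, D_fun_add (hy3.fun_sub (hs1.fun_mul hy)) (hs0.fun_mul hy1) ht,
      D_fun_sub hy3 (hs1.fun_mul hy) ht]
  have hDDqy3 : D (D qy3) x
      = D (D (D (D (D y)))) x - D (D fun s => s1 s * y s) x + D (D fun s => s0 s * D y s) x := by
    rw [D_congr hDqy3 hx, D_fun_add (hy4.fun_sub hs1y) hs0y1 hx, D_fun_sub hy4 hs1y hx]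
  have hqy4' : D qy4 x = D (D qy3) x + D (fun t => s0 t * D (D y) t) x := by
    rw [hqy4, D_fun_add ((hy4.fun_sub hs1y).fun_add hs0y1 |>.congr hDqy3) (hs0.fun_mul hy2) hx]
  simp only [hqy5, hqy4', hDDqy3, D_D_fun_mul hs1 hs1' hy hy1 hx]
  ring

/-- Let `σ₀, σ₁` be twice continuously differentiable on `[0,1]` and `y`
five times differentiable on `[0,1]`. Define the quasi-derivatives
`y⁽¹⁾ := y'`, `y⁽²⁾ := y''`, `y⁽³⁾ := y''' - σ₁·y + σ₀·y'`,
`y⁽⁴⁾ := (y⁽³⁾)' + σ₀·y''`, `y⁽⁵⁾ := (y⁽⁴⁾)' + σ₁·y''`.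
Then for every `x ∈ [0,1]`,
`y⁽⁵⁾(x) = y⁗'(x) + (σ₀·y'')'(x) + (σ₀·y')''(x) - (σ₁'·y)'(x) - σ₁'(x)·y'(x)`,
i.e. the quasi-derivative scheme generated by the 5×5 associated matrix realizes the
fifth-order expression `ℓ₅(y) = y⁽⁵⁾ + (p y'')' + (p y')'' + (q y)' + q y'` with
`p = σ₀`, `q = -σ₁'`. -/
theorem statement6 (s0 s1 y : ℝ → ℂ)
    (hs0 : DifferentiableOn ℝ s0 (Icc 0 1))
    (hs0' : DifferentiableOn ℝ (D s0) (Icc 0 1))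
    (hs0'' : ContinuousOn (D (D s0)) (Icc 0 1))
    (hs1 : DifferentiableOn ℝ s1 (Icc 0 1))
    (hs1' : DifferentiableOn ℝ (D s1) (Icc 0 1))
    (hs1'' : ContinuousOn (D (D s1)) (Icc 0 1))
    (hy : DifferentiableOn ℝ y (Icc 0 1))
    (hy1 : DifferentiableOn ℝ (D y) (Icc 0 1))
    (hy2 : DifferentiableOn ℝ (D (D y)) (Icc 0 1))
    (hy3 : DifferentiableOn ℝ (D (D (D y))) (Icc 0 1))
    (hy4 : DifferentiableOn ℝ (D (D (D (D y)))) (Icc 0 1))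
    (qy3 qy4 qy5 : ℝ → ℂ)
    (hqy3 : qy3 = fun x => D (D (D y)) x - s1 x * y x + s0 x * D y x)
    (hqy4 : qy4 = fun x => D qy3 x + s0 x * D (D y) x)
    (hqy5 : qy5 = fun x => D qy4 x + s1 x * D (D y) x) :
    ∀ x ∈ Icc (0:ℝ) 1,
      qy5 x = D (D (D (D (D y)))) x
        + D (fun t => s0 t * D (D y) t) x
        + D (D (fun t => s0 t * D y t)) x
        - D (fun t => D s1 t * y t) x
        - D s1 x * D y x :=
  statement6_general s0 s1 y hs0 hs0' hs1 hs1' hy hy1 hy2 hy3 hy4 qy3 qy4 qy5 hqy3 hqy4 hqy5
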